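/- arXiv:2510.03928 — 4 statements merged into one kernel-verified Lean document; each statement's English description precedes it below -/
import Mathlib

section
/- Let R be a saturated equivalence relation on a complex vector space V such that for every maximal ideal m of C[V]^R, the extension ideal C[V]·m is a proper ideal of C[V]. Then R is detectable. -/
/-- The subalgebra of `R`-invariant polynomial functions. -/
noncomputable def invAlg (σ : Type) (R : Set ((σ → ℂ) × (σ → ℂ))) : Subalgebra ℂ (MvPolynomial σ ℂ) where
  carrier := {f | ∀ p ∈ R, MvPolynomial.eval p.1 f = MvPolynomial.eval p.2 f}
  add_mem' := fun ha hb p hp => by simp [ha p hp, hb p hp]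
  mul_mem' := fun ha hb p hp => by simp [ha p hp, hb p hp]
  algebraMap_mem' := fun c p hp => by simp

/-- The common zero set in `σ → ℂ` of an ideal of the invariant algebra. -/
def zeroSet {σ : Type} {R : Set ((σ → ℂ) × (σ → ℂ))} (m : Ideal (invAlg σ R)) :
    Set (σ → ℂ) :=
  {x | ∀ f ∈ m, MvPolynomial.eval x (f : MvPolynomial σ ℂ) = 0}

/-- `R` is detectable: the common zero set of every maximal ideal of `ℂ[V]^R`
is exactly one `R`-equivalence class. -/
def Detectable (σ : Type) (R : Set ((σ → ℂ) × (σ → ℂ))) : Prop :=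
  ∀ m : Ideal (invAlg σ R), m.IsMaximal → ∃ x : σ → ℂ, zeroSet m = {y | (x, y) ∈ R}

/-!
By the Nullstellensatz, a maximal ideal `m` of `ℂ[V]^R` whose extension to `ℂ[V]` is proper lies
in the maximal ideal of some point `x`, so `m` is the kernel of evaluation at `x` on `ℂ[V]^R`.
The zero set of that kernel consists of the points that no invariant separates from `x`, which by
saturation is the `R`-class of `x`.
-/

namespace MvPolynomial

theorem exists_forall_eval_eq_zero_of_map_val_ne_top {σ K : Type*} [Field K] [IsAlgClosed K]
    [Finite σ] {S : Subalgebra K (MvPolynomial σ K)} {I : Ideal S} (hI : I.map S.val ≠ ⊤) :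
    ∃ x : σ → K, ∀ f ∈ I, eval x (f : MvPolynomial σ K) = 0 := by
  obtain ⟨M, hM, hIM⟩ := Ideal.exists_le_maximal _ hI
  obtain ⟨x, rfl⟩ := isMaximal_iff_eq_vanishingIdeal_singleton.mp hM
  exact ⟨x, fun f hf => (mem_vanishingIdeal_singleton_iff x _).mp (hIM (Ideal.mem_map_of_mem _ hf))⟩

section Subalgebra

variable {σ R : Type*} [CommRing R] (S : Subalgebra R (MvPolynomial σ R))

theorem ker_eval_comp_val_eq_of_isMaximal [Nontrivial R] {m : Ideal S} (hm : m.IsMaximal)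
    {x : σ → R} (hx : ∀ f ∈ m, eval x (f : MvPolynomial σ R) = 0) :
    RingHom.ker ((eval x).comp (S.val : S →+* MvPolynomial σ R)) = m :=
  (hm.eq_of_le (RingHom.ker_ne_top _) fun f hf => RingHom.mem_ker.mpr (hx f hf)).symm

theorem forall_ker_eval_comp_val_eval_eq_zero_iff (x y : σ → R) :
    (∀ f ∈ RingHom.ker ((eval x).comp (S.val : S →+* MvPolynomial σ R)),
      eval y (f : MvPolynomial σ R) = 0) ↔ ∀ f ∈ S, eval x f = eval y f := by
  constructor
  · intro hy f hf
    -- `f - f(x)` is an element of `S` vanishing at `x`.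
    have hker : (⟨f, hf⟩ - algebraMap R S (eval x f) : S) ∈
        RingHom.ker ((eval x).comp (S.val : S →+* MvPolynomial σ R)) := by
      simp [RingHom.mem_ker]
    have := hy _ hker
    simp only [Subalgebra.coe_sub, Subalgebra.coe_algebraMap, algebraMap_eq, map_sub, eval_C,
      sub_eq_zero] at this
    exact this.symm
  · intro hxy f hf
    rw [← hxy f f.2]
    exact hf

end Subalgebra

end MvPolynomial

theorem stmt2_general (n : ℕ) (R : Set ((Fin n → ℂ) × (Fin n → ℂ)))
    (hsat : {p : (Fin n → ℂ) × (Fin n → ℂ) |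
      ∀ f ∈ invAlg (Fin n) R, MvPolynomial.eval p.1 f = MvPolynomial.eval p.2 f} = R)
    (hproper : ∀ m : Ideal (invAlg (Fin n) R), m.IsMaximal →
      Ideal.map (invAlg (Fin n) R).val m ≠ (⊤ : Ideal (MvPolynomial (Fin n) ℂ))) :
    Detectable (Fin n) R := by
  intro m hm
  obtain ⟨x, hx⟩ := MvPolynomial.exists_forall_eval_eq_zero_of_map_val_ne_top (hproper m hm)
  refine ⟨x, Set.ext fun y => ?_⟩
  rw [← MvPolynomial.ker_eval_comp_val_eq_of_isMaximal _ hm hx]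
  exact (MvPolynomial.forall_ker_eval_comp_val_eval_eq_zero_iff _ x y).trans
    (Set.ext_iff.mp hsat (x, y))

/-- A saturated equivalence relation whose maximal ideals extend to proper ideals
of the polynomial ring is detectable. -/
theorem stmt2 (n : ℕ) (R : Set ((Fin n → ℂ) × (Fin n → ℂ)))
    (hequiv : Equivalence (fun x y => (x, y) ∈ R))
    (hsat : {p : (Fin n → ℂ) × (Fin n → ℂ) |
      ∀ f ∈ invAlg (Fin n) R, MvPolynomial.eval p.1 f = MvPolynomial.eval p.2 f} = R)
    (hproper : ∀ m : Ideal (invAlg (Fin n) R), m.IsMaximal →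
      Ideal.map (invAlg (Fin n) R).val m ≠ (⊤ : Ideal (MvPolynomial (Fin n) ℂ))) :
    Detectable (Fin n) R :=
  stmt2_general n R hsat hproper
end

section
/- The set of linear Lagrangian relations on V is closed under composition: if L and L' are linear Lagrangian relations on V, then L'∘L = {(x,z) : ∃y, (x,y)∈L, (y,z)∈L'} is a linear Lagrangian relation (it is isotropic and has dimension n = dim V). -/
open Module Submodule

variable {V : Type} [AddCommGroup V] [Module ℂ V]

/-- The form `B((v,w),(v',w')) = ⟨v|v'⟩ − ⟨w|w'⟩` on `V × V`. -/
noncomputable def BB (b : LinearMap.BilinForm ℂ V) : LinearMap.BilinForm ℂ (V × V) :=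
  LinearMap.mk₂ ℂ (fun p q => b p.1 q.1 - b p.2 q.2)
    (by intros; simp; ring)
    (by intros; simp; ring)
    (by intros; simp; ring)
    (by intros; simp; ring)

/-- A linear relation `L ⊆ V × V` is isotropic if `B` vanishes on it. -/
def IsIsotropicRel (b : LinearMap.BilinForm ℂ V) (L : Submodule ℂ (V × V)) : Prop :=
  ∀ p ∈ L, ∀ q ∈ L, BB b p q = 0

/-- A linear Lagrangian relation: an isotropic subspace of `V × V` of dimension `dim V`. -/
def IsLagrangianRel [FiniteDimensional ℂ V] (b : LinearMap.BilinForm ℂ V)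
    (L : Submodule ℂ (V × V)) : Prop :=
  IsIsotropicRel b L ∧ finrank ℂ L = finrank ℂ V

/-- Composition of linear relations: `rcomp L L' = L' ∘ L = {(x,z) | ∃ y, (x,y) ∈ L, (y,z) ∈ L'}`. -/
def rcomp (L L' : Submodule ℂ (V × V)) : Submodule ℂ (V × V) where
  carrier := {p | ∃ y, (p.1, y) ∈ L ∧ (y, p.2) ∈ L'}
  add_mem' := fun ⟨y, h1, h2⟩ ⟨y', h1', h2'⟩ => ⟨y + y', L.add_mem h1 h1', L'.add_mem h2 h2'⟩
  zero_mem' := ⟨0, L.zero_mem, L'.zero_mem⟩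
  smul_mem' := fun c p ⟨y, h1, h2⟩ => ⟨c • y, L.smul_mem c h1, L'.smul_mem c h2⟩

/-!
`L' ∘ L` is the image under `((x, y), (y, z)) ↦ (x, z)` of the space of composable pairs in
`L × L'`. Rank–nullity, applied once to `((x, y), (y', z)) ↦ y - y'` on `L × L'` and once to the
projection above, gives `dim (L' ∘ L) = dim L + dim L' - dim W - dim K`, where
`W = π₂ L + π₁ L'` and `K = {y | (0, y) ∈ L ∧ (y, 0) ∈ L'}` is the kernel of the projection.
A Lagrangian relation is its own `B`-orthogonal, which identifies `K` with the `b`-orthogonal of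
`W`; hence `dim K = n - dim W` and `dim (L' ∘ L) = 2n - dim W - (n - dim W) = n`.
-/

theorem Submodule.finrank_map_add_finrank_inf_ker {K M N : Type*} [DivisionRing K]
    [AddCommGroup M] [Module K M] [AddCommGroup N] [Module K N] [FiniteDimensional K M]
    (f : M →ₗ[K] N) (P : Submodule K M) :
    finrank K (P.map f) + finrank K ↥(P ⊓ LinearMap.ker f) = finrank K P := by
  have h := (f.domRestrict P).finrank_range_add_finrank_ker
  rwa [LinearMap.range_domRestrict, LinearMap.ker_domRestrict,
    ← finrank_map_subtype_eq P (comap P.subtype (LinearMap.ker f)), map_comap_subtype] at h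

theorem Submodule.finrank_prod {K M N : Type*} [DivisionRing K]
    [AddCommGroup M] [Module K M] [AddCommGroup N] [Module K N]
    [FiniteDimensional K M] [FiniteDimensional K N] (p : Submodule K M) (q : Submodule K N) :
    finrank K (p.prod q) = finrank K p + finrank K q := by
  have h := LinearMap.finrank_range_of_inj (f := p.subtype.prodMap q.subtype)
    (p.injective_subtype.prodMap q.injective_subtype)
  rwa [LinearMap.range_prodMap, range_subtype, range_subtype, Module.finrank_prod] at h

theorem LinearMap.BilinForm.orthogonal_sup {K M : Type*} [CommRing K] [AddCommGroup M]
    [Module K M] (B : LinearMap.BilinForm K M) (W₁ W₂ : Submodule K M) :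
    B.orthogonal (W₁ ⊔ W₂) = B.orthogonal W₁ ⊓ B.orthogonal W₂ := by
  ext y
  simp only [mem_inf, LinearMap.BilinForm.mem_orthogonal_iff]
  refine ⟨fun h => ⟨fun w hw => h w (mem_sup_left hw), fun w hw => h w (mem_sup_right hw)⟩,
    fun ⟨h₁, h₂⟩ w hw => ?_⟩
  obtain ⟨w₁, hw₁, w₂, hw₂, rfl⟩ := mem_sup.mp hw
  rw [map_add, LinearMap.add_apply, h₁ w₁ hw₁, h₂ w₂ hw₂, add_zero]

namespace LinearRel

variable (V) in
def gap : (V × V) × (V × V) →ₗ[ℂ] V :=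
  (LinearMap.snd ℂ V V).coprod (-LinearMap.fst ℂ V V)

theorem gap_apply (p q : V × V) : gap V (p, q) = p.2 - q.1 :=
  (sub_eq_add_neg _ _).symm

theorem mem_ker_gap {p q : V × V} : (p, q) ∈ LinearMap.ker (gap V) ↔ p.2 = q.1 := by
  rw [LinearMap.mem_ker, gap_apply, sub_eq_zero]

variable (V) in
def ends : (V × V) × (V × V) →ₗ[ℂ] V × V :=
  (LinearMap.fst ℂ V V).prodMap (LinearMap.snd ℂ V V)

variable (V) in
def midIncl : V →ₗ[ℂ] (V × V) × (V × V) :=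
  (LinearMap.inr ℂ V V).prod (LinearMap.inl ℂ V V)

theorem midIncl_injective : Function.Injective (midIncl V) := fun _ _ h =>
  congrArg (fun t : (V × V) × (V × V) => t.1.2) h

variable (L L' : Submodule ℂ (V × V))

def composable : Submodule ℂ ((V × V) × (V × V)) :=
  L.prod L' ⊓ LinearMap.ker (gap V)

def midKernel : Submodule ℂ V :=
  L.comap (LinearMap.inr ℂ V V) ⊓ L'.comap (LinearMap.inl ℂ V V)

theorem rcomp_eq_map_composable : rcomp L L' = (composable L L').map (ends V) := by
  ext ⟨x, z⟩
  constructor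
  · rintro ⟨y, hxy, hyz⟩
    exact ⟨((x, y), (y, z)), ⟨⟨hxy, hyz⟩, mem_ker_gap.mpr rfl⟩, rfl⟩
  · rintro ⟨⟨⟨x', y⟩, ⟨y', z'⟩⟩, ⟨⟨hxy, hyz⟩, hgap⟩, hends⟩
    obtain rfl : y = y' := mem_ker_gap.mp hgap
    obtain ⟨rfl, rfl⟩ := Prod.mk.inj hends
    exact ⟨y, hxy, hyz⟩

theorem map_gap_prod :
    (L.prod L').map (gap V) = L.map (LinearMap.snd ℂ V V) ⊔ L'.map (LinearMap.fst ℂ V V) := by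
  rw [gap, LinearMap.map_coprod_prod, Submodule.map_neg]

theorem composable_inf_ker_ends :
    composable L L' ⊓ LinearMap.ker (ends V) = (midKernel L L').map (midIncl V) := by
  ext ⟨⟨x, y⟩, ⟨y', z⟩⟩
  constructor
  · rintro ⟨⟨⟨hxy, hyz⟩, hgap⟩, hends⟩
    obtain rfl : y = y' := mem_ker_gap.mp hgap
    obtain ⟨rfl, rfl⟩ := Prod.mk.inj hends
    exact ⟨y, ⟨hxy, hyz⟩, rfl⟩
  · rintro ⟨t, ⟨ht₁, ht₂⟩, h⟩
    obtain ⟨⟨rfl, rfl⟩, rfl, rfl⟩ := h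
    exact ⟨⟨⟨ht₁, ht₂⟩, mem_ker_gap.mpr rfl⟩, rfl⟩

theorem finrank_rcomp_add_finrank_add_finrank_midKernel [FiniteDimensional ℂ V] :
    finrank ℂ (rcomp L L') +
        finrank ℂ ↥(L.map (LinearMap.snd ℂ V V) ⊔ L'.map (LinearMap.fst ℂ V V)) +
        finrank ℂ (midKernel L L') = finrank ℂ L + finrank ℂ L' := by
  have hgap := finrank_map_add_finrank_inf_ker (gap V) (L.prod L')
  have hends := finrank_map_add_finrank_inf_ker (ends V) (composable L L')
  rw [map_gap_prod, Submodule.finrank_prod] at hgap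
  rw [← rcomp_eq_map_composable, composable_inf_ker_ends,
    ← (equivMapOfInjective _ midIncl_injective _).finrank_eq, composable] at hends
  omega

end LinearRel

theorem BB_apply (b : LinearMap.BilinForm ℂ V) (p q : V × V) :
    BB b p q = b p.1 q.1 - b p.2 q.2 := rfl

section Form

variable {b : LinearMap.BilinForm ℂ V}

theorem BB_nondegenerate (hb : b.Nondegenerate) : (BB b).Nondegenerate := by
  refine ⟨fun p hp => Prod.ext (hb.1 _ fun w => ?_) (hb.1 _ fun w => ?_),
    fun p hp => Prod.ext (hb.2 _ fun w => ?_) (hb.2 _ fun w => ?_)⟩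
  · simpa [BB_apply] using hp (w, 0)
  · simpa [BB_apply] using hp (0, w)
  · simpa [BB_apply] using hp (w, 0)
  · simpa [BB_apply] using hp (0, w)

theorem comap_inr_orthogonal_BB (L : Submodule ℂ (V × V)) :
    ((BB b).orthogonal L).comap (LinearMap.inr ℂ V V) =
      b.orthogonal (L.map (LinearMap.snd ℂ V V)) := by
  ext y
  simpa [LinearMap.BilinForm.mem_orthogonal_iff, BB_apply] using forall_comm

theorem comap_inl_orthogonal_BB (L : Submodule ℂ (V × V)) :
    ((BB b).orthogonal L).comap (LinearMap.inl ℂ V V) =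
      b.orthogonal (L.map (LinearMap.fst ℂ V V)) := by
  ext y
  simp [LinearMap.BilinForm.mem_orthogonal_iff, BB_apply]

theorem IsIsotropicRel.rcomp {L L' : Submodule ℂ (V × V)} (hL : IsIsotropicRel b L)
    (hL' : IsIsotropicRel b L') : IsIsotropicRel b (rcomp L L') := by
  rintro p ⟨y, hpL, hpL'⟩ q ⟨y', hqL, hqL'⟩
  have h := hL _ hpL _ hqL
  have h' := hL' _ hpL' _ hqL'
  rw [BB_apply] at h h' ⊢
  linear_combination h + h'

theorem IsLagrangianRel.orthogonal_eq [FiniteDimensional ℂ V] (hb : b.Nondegenerate)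
    {L : Submodule ℂ (V × V)} (hL : IsLagrangianRel b L) : (BB b).orthogonal L = L := by
  have hle : L ≤ (BB b).orthogonal L := fun q hq p hp => hL.1 p hp q hq
  refine (eq_of_le_of_finrank_le hle ?_).symm
  rw [LinearMap.BilinForm.finrank_orthogonal (BB_nondegenerate hb), Module.finrank_prod, hL.2]
  omega

theorem LinearRel.midKernel_eq_orthogonal [FiniteDimensional ℂ V] (hb : b.Nondegenerate)
    {L L' : Submodule ℂ (V × V)} (hL : IsLagrangianRel b L) (hL' : IsLagrangianRel b L') :
    midKernel L L' =
      b.orthogonal (L.map (LinearMap.snd ℂ V V) ⊔ L'.map (LinearMap.fst ℂ V V)) := by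
  rw [midKernel, LinearMap.BilinForm.orthogonal_sup, ← comap_inr_orthogonal_BB,
    ← comap_inl_orthogonal_BB, hL.orthogonal_eq hb, hL'.orthogonal_eq hb]

end Form

theorem stmt8_general {V : Type} [AddCommGroup V] [Module ℂ V] [FiniteDimensional ℂ V]
    (b : LinearMap.BilinForm ℂ V) (hnd : b.Nondegenerate)
    (L L' : Submodule ℂ (V × V)) (hL : IsLagrangianRel b L) (hL' : IsLagrangianRel b L') :
    IsLagrangianRel b (rcomp L L') := by
  refine ⟨hL.1.rcomp hL'.1, ?_⟩
  have hdim := LinearRel.finrank_rcomp_add_finrank_add_finrank_midKernel L L'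
  rw [LinearRel.midKernel_eq_orthogonal hnd hL hL', LinearMap.BilinForm.finrank_orthogonal hnd,
    hL.2, hL'.2] at hdim
  have := Submodule.finrank_le (L.map (LinearMap.snd ℂ V V) ⊔ L'.map (LinearMap.fst ℂ V V))
  omega

/-- The composition of two linear Lagrangian relations is a linear Lagrangian relation. -/
theorem stmt8 {V : Type} [AddCommGroup V] [Module ℂ V] [FiniteDimensional ℂ V]
    (b : LinearMap.BilinForm ℂ V) (hsymm : b.IsSymm) (hnd : b.Nondegenerate)
    (L L' : Submodule ℂ (V × V)) (hL : IsLagrangianRel b L) (hL' : IsLagrangianRel b L') :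
    IsLagrangianRel b (rcomp L L') :=
  stmt8_general b hnd L L' hL hL'
end

section
/- For linear Lagrangian relations L, L' on V, the atypicality satisfies max(a(L), a(L')) ≤ a(L'∘L) ≤ a(L) + a(L'). -/
open Module Submodule

variable {V : Type} [AddCommGroup V] [Module ℂ V]

/-- The atypicality of a linear Lagrangian relation: `dim ker(p₁|_L)`. -/
noncomputable def atyp {V : Type} [AddCommGroup V] [Module ℂ V] [FiniteDimensional ℂ V]
    (L : Submodule ℂ (V × V)) : ℕ :=
  finrank ℂ (L ⊓ Submodule.prod (⊥ : Submodule ℂ V) (⊤ : Submodule ℂ V) : Submodule ℂ (V × V))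

/-!
Let `K = {y | (0, y) ∈ L}` and `T = {x | (x, 0) ∈ L'}`. The space `{z | (0, z) ∈ L' ∘ L}` is the
image under the second projection of `N = L' ∩ (K × V)`, with kernel `K ∩ T`, while the first
projection maps `N` onto `K ∩ p₁ L'` with kernel `{0} × {y | (0, y) ∈ L'}`. Hence
`a(L' ∘ L) + dim (K ∩ T) = dim (K ∩ p₁ L') + a(L')`, which gives the upper bound at once;
`a(L') ≤ a(L' ∘ L)` is an inclusion. For Lagrangian `L'` the isotropy of `L'` and rank-nullity
force `p₁ L' = Tᗮ` and `dim T = a(L')`, and for the isotropic subspace `K` a dimension count gives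
`dim K + dim (K ∩ T) ≤ dim (K ∩ Tᗮ) + dim T`, i.e. `a(L) ≤ a(L' ∘ L)`.
-/

section FiniteDimensional

variable {𝕜 E F : Type*} [Field 𝕜] [AddCommGroup E] [Module 𝕜 E] [AddCommGroup F] [Module 𝕜 F]

theorem Submodule.finrank_map_add_finrank_inf_ker_s9 [FiniteDimensional 𝕜 E] (f : E →ₗ[𝕜] F)
    (p : Submodule 𝕜 E) :
    finrank 𝕜 (p.map f) + finrank 𝕜 (p ⊓ LinearMap.ker f : Submodule 𝕜 E) = finrank 𝕜 p := by
  have h := LinearMap.finrank_range_add_finrank_ker (f.domRestrict p)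
  rw [LinearMap.range_domRestrict, LinearMap.ker_domRestrict] at h
  rwa [← (comapSubtypeEquivOfLe (inf_le_left : p ⊓ LinearMap.ker f ≤ p)).finrank_eq,
    comap_inf, comap_subtype_self, top_inf_eq]

theorem Submodule.finrank_comap_of_injective {f : F →ₗ[𝕜] E} (hf : Function.Injective f)
    (q : Submodule 𝕜 E) :
    finrank 𝕜 (q.comap f) = finrank 𝕜 (q ⊓ LinearMap.range f : Submodule 𝕜 E) := by
  rw [inf_comm, ← map_comap_eq]
  exact ((q.comap f).equivMapOfInjective f hf).finrank_eq

/-- For isotropic `I`, `(Iᗮ ⊔ T)ᗮ ≤ I ⊓ Tᗮ`; counting dimensions and using `I ⊓ T ≤ Iᗮ ⊓ T`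
gives the bound. -/
theorem LinearMap.BilinForm.finrank_add_finrank_inf_le_of_le_orthogonal [FiniteDimensional 𝕜 E]
    {B : LinearMap.BilinForm 𝕜 E} (hB : B.Nondegenerate) (hB₀ : B.IsRefl)
    {I : Submodule 𝕜 E} (hI : I ≤ B.orthogonal I) (T : Submodule 𝕜 E) :
    finrank 𝕜 I + finrank 𝕜 (I ⊓ T : Submodule 𝕜 E) ≤
      finrank 𝕜 (I ⊓ B.orthogonal T : Submodule 𝕜 E) + finrank 𝕜 T := by
  have hle : B.orthogonal (B.orthogonal I ⊔ T) ≤ I ⊓ B.orthogonal T :=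
    le_inf ((orthogonal_le le_sup_left).trans (orthogonal_orthogonal hB hB₀ I).le)
      (orthogonal_le le_sup_right)
  have h_sup := finrank_sup_add_finrank_inf_eq (B.orthogonal I) T
  have h_orth_sup := finrank_orthogonal hB (B.orthogonal I ⊔ T)
  have h_orth := finrank_orthogonal hB I
  have h_inf := finrank_mono (inf_le_inf_right T hI)
  have := finrank_mono hle
  have := I.finrank_le
  have := (B.orthogonal I ⊔ T).finrank_le
  omega

end FiniteDimensional

def relKer (S : Submodule ℂ (V × V)) : Submodule ℂ V := S.comap (LinearMap.inl ℂ V V)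

def relIndet (S : Submodule ℂ (V × V)) : Submodule ℂ V := S.comap (LinearMap.inr ℂ V V)

section Relations

variable {b : LinearMap.BilinForm ℂ V}

theorem IsIsotropicRel.map_fst_le_orthogonal {S : Submodule ℂ (V × V)} (h : IsIsotropicRel b S) :
    S.map (LinearMap.fst ℂ V V) ≤ b.orthogonal (relKer S) := by
  rintro _ ⟨p, hp, rfl⟩ x hx
  simpa [BB] using h (x, 0) hx p hp

theorem IsIsotropicRel.map_snd_le_orthogonal {S : Submodule ℂ (V × V)} (h : IsIsotropicRel b S) :
    S.map (LinearMap.snd ℂ V V) ≤ b.orthogonal (relIndet S) := by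
  rintro _ ⟨p, hp, rfl⟩ y hy
  simpa [BB] using h (0, y) hy p hp

theorem IsIsotropicRel.relIndet_le_orthogonal {S : Submodule ℂ (V × V)} (h : IsIsotropicRel b S) :
    relIndet S ≤ b.orthogonal (relIndet S) :=
  fun y hy => h.map_snd_le_orthogonal ⟨(0, y), hy, rfl⟩

theorem relIndet_rcomp (L L' : Submodule ℂ (V × V)) :
    relIndet (rcomp L L') = (L' ⊓ (relIndet L).prod ⊤).map (LinearMap.snd ℂ V V) := by
  ext z
  constructor
  · rintro ⟨y, hy, hyz⟩
    exact ⟨(y, z), ⟨hyz, hy, trivial⟩, rfl⟩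
  · rintro ⟨⟨y, z⟩, ⟨hyz, hy, -⟩, rfl⟩
    exact ⟨y, hy, hyz⟩

variable [FiniteDimensional ℂ V]

theorem atyp_eq_finrank_relIndet (S : Submodule ℂ (V × V)) :
    atyp S = finrank ℂ (relIndet S) := by
  rw [atyp, ← comap_fst, relIndet, finrank_comap_of_injective LinearMap.inr_injective,
    LinearMap.range_inr]
  rfl

theorem finrank_map_fst_add_atyp (S : Submodule ℂ (V × V)) :
    finrank ℂ (S.map (LinearMap.fst ℂ V V)) + atyp S = finrank ℂ S := by
  rw [atyp_eq_finrank_relIndet, relIndet, finrank_comap_of_injective LinearMap.inr_injective,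
    LinearMap.range_inr, finrank_map_add_finrank_inf_ker_s9]

theorem finrank_map_snd_add_finrank_relKer (S : Submodule ℂ (V × V)) :
    finrank ℂ (S.map (LinearMap.snd ℂ V V)) + finrank ℂ (relKer S) = finrank ℂ S := by
  rw [relKer, finrank_comap_of_injective LinearMap.inl_injective, LinearMap.range_inl,
    finrank_map_add_finrank_inf_ker_s9]

theorem IsLagrangianRel.finrank_relKer (hnd : b.Nondegenerate) {L : Submodule ℂ (V × V)}
    (hL : IsLagrangianRel b L) : finrank ℂ (relKer L) = atyp L := by
  have h_fst := finrank_map_fst_add_atyp L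
  have h_snd := finrank_map_snd_add_finrank_relKer L
  have h_fst_le := finrank_mono hL.1.map_fst_le_orthogonal
  have h_snd_le := finrank_mono hL.1.map_snd_le_orthogonal
  rw [LinearMap.BilinForm.finrank_orthogonal hnd] at h_fst_le h_snd_le
  rw [← atyp_eq_finrank_relIndet] at h_snd_le
  rw [hL.2] at h_fst h_snd
  omega

theorem IsLagrangianRel.map_fst_eq_orthogonal (hnd : b.Nondegenerate) {L : Submodule ℂ (V × V)}
    (hL : IsLagrangianRel b L) :
    L.map (LinearMap.fst ℂ V V) = b.orthogonal (relKer L) := by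
  refine eq_of_le_of_finrank_le hL.1.map_fst_le_orthogonal ?_
  have := finrank_map_fst_add_atyp L
  rw [LinearMap.BilinForm.finrank_orthogonal hnd, hL.finrank_relKer hnd, ← hL.2]
  omega

theorem atyp_rcomp_add_finrank_relIndet_inf_relKer (L L' : Submodule ℂ (V × V)) :
    atyp (rcomp L L') + finrank ℂ (relIndet L ⊓ relKer L' : Submodule ℂ V) =
      finrank ℂ (relIndet L ⊓ L'.map (LinearMap.fst ℂ V V) : Submodule ℂ V) + atyp L' := by
  set N := L' ⊓ (relIndet L).prod ⊤
  have h_relKer : relKer N = relIndet L ⊓ relKer L' := by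
    rw [relKer, comap_inf, prod_comap_inl, inf_comm]
    rfl
  have h_relIndet : relIndet N = relIndet L' := by
    rw [relIndet, comap_inf, prod_comap_inr, inf_top_eq]
    rfl
  have h_map_fst : N.map (LinearMap.fst ℂ V V) = relIndet L ⊓ L'.map (LinearMap.fst ℂ V V) := by
    ext x
    constructor
    · rintro ⟨p, ⟨hp, hp₁, -⟩, rfl⟩
      exact ⟨hp₁, p, hp, rfl⟩
    · rintro ⟨hx, p, hp, rfl⟩
      exact ⟨p, ⟨hp, hx, trivial⟩, rfl⟩
  have h_snd := finrank_map_snd_add_finrank_relKer N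
  have h_fst := finrank_map_fst_add_atyp N
  rw [← relIndet_rcomp, ← atyp_eq_finrank_relIndet, h_relKer] at h_snd
  rw [h_map_fst, atyp_eq_finrank_relIndet N, h_relIndet, ← atyp_eq_finrank_relIndet] at h_fst
  omega

theorem atyp_rcomp_le_add (L L' : Submodule ℂ (V × V)) :
    atyp (rcomp L L') ≤ atyp L + atyp L' := by
  have := atyp_rcomp_add_finrank_relIndet_inf_relKer L L'
  have := finrank_mono (inf_le_left : relIndet L ⊓ L'.map (LinearMap.fst ℂ V V) ≤ relIndet L)
  rw [← atyp_eq_finrank_relIndet] at this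
  omega

theorem atyp_le_atyp_rcomp_right (L L' : Submodule ℂ (V × V)) : atyp L' ≤ atyp (rcomp L L') := by
  simp only [atyp_eq_finrank_relIndet]
  exact finrank_mono fun z hz => ⟨0, L.zero_mem, hz⟩

theorem atyp_le_atyp_rcomp_left (hb : b.IsRefl) (hnd : b.Nondegenerate)
    {L L' : Submodule ℂ (V × V)} (hL : IsIsotropicRel b L) (hL' : IsLagrangianRel b L') :
    atyp L ≤ atyp (rcomp L L') := by
  have h_rcomp := atyp_rcomp_add_finrank_relIndet_inf_relKer L L'
  have h_count := LinearMap.BilinForm.finrank_add_finrank_inf_le_of_le_orthogonal hnd hb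
    hL.relIndet_le_orthogonal (relKer L')
  rw [hL'.map_fst_eq_orthogonal hnd] at h_rcomp
  rw [hL'.finrank_relKer hnd, ← atyp_eq_finrank_relIndet] at h_count
  omega

end Relations

/-- `max(a(L), a(L')) ≤ a(L' ∘ L) ≤ a(L) + a(L')` for linear Lagrangian relations. -/
theorem stmt9 {V : Type} [AddCommGroup V] [Module ℂ V] [FiniteDimensional ℂ V]
    (b : LinearMap.BilinForm ℂ V) (hsymm : b.IsSymm) (hnd : b.Nondegenerate)
    (L L' : Submodule ℂ (V × V)) (hL : IsLagrangianRel b L) (hL' : IsLagrangianRel b L') :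
    max (atyp L) (atyp L') ≤ atyp (rcomp L L') ∧
      atyp (rcomp L L') ≤ atyp L + atyp L' :=
  ⟨max_le (atyp_le_atyp_rcomp_left hsymm.isRefl hnd hL.1 hL') (atyp_le_atyp_rcomp_right L L'),
    atyp_rcomp_le_add L L'⟩
end

section
/- If R and R' are detectable equivalence relations on finite-dimensional complex vector spaces V and V' respectively, then R×R' is a detectable equivalence relation on V×V'. In particular, every maximal ideal m of C[V]^R ⊗ C[V']^{R'} has residue field C, so maximal ideals correspond to pairs of C-algebra homomorphisms (C[V]^R → C, C[V']^{R'} → C). -/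
/-- The product of two equivalence relations, on `(Fin n ⊕ Fin m) → ℂ`. -/
def prodRel (n m : ℕ) (R : Set ((Fin n → ℂ) × (Fin n → ℂ)))
    (R' : Set ((Fin m → ℂ) × (Fin m → ℂ))) :
    Set (((Fin n ⊕ Fin m) → ℂ) × ((Fin n ⊕ Fin m) → ℂ)) :=
  {p | (p.1 ∘ Sum.inl, p.2 ∘ Sum.inl) ∈ R ∧ (p.1 ∘ Sum.inr, p.2 ∘ Sum.inr) ∈ R'}

/-!
A maximal ideal of a `ℂ`-algebra of countable dimension has residue field `ℂ`: otherwise the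
residue field contains a transcendental `t`, and the `(t - a)⁻¹`, `a ∈ ℂ`, are uncountably many
linearly independent elements. This gives the second claim, and turns a maximal ideal `𝔪` of
`ℂ[V × V']^{R × R'}` into the kernel of a character `φ`. Restricting `φ` to `ℂ[V]^R` and
`ℂ[V']^{R'}` and using detectability of `R` and `R'` yields points `x` and `y` at which `φ` is
evaluation on both factors. Since `R` and `R'` are reflexive, an `R × R'`-invariant polynomial is
invariant in each variable separately; expanding it in a linearly independent family of invariants
in the second variable shows that its coefficients are invariant in the first, so
`ℂ[V × V']^{R × R'}` is generated by the two factors. Hence `φ` is evaluation at `(x, y)`, whose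
zero set is the class of `(x, y)`.
-/

universe u

open MvPolynomial Cardinal

theorem Algebra.IsAlgebraic.of_rank_lt_mk {K L : Type u} [Field K] [Field L] [Algebra K L]
    (h : Module.rank K L < #K) : Algebra.IsAlgebraic K L :=
  ⟨fun x => by
    by_contra hx
    exact h.not_ge (Transcendental.linearIndependent_sub_inv hx).cardinal_le_rank⟩

theorem Ideal.IsMaximal.exists_algHom_ker_eq {K A : Type u} [Field K] [IsAlgClosed K]
    [CommRing A] [Algebra K A] (hA : Module.rank K A < #K) {M : Ideal A} (hM : M.IsMaximal) :
    ∃ φ : A →ₐ[K] K, M = RingHom.ker φ := by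
  let : Field (A ⧸ M) := Ideal.Quotient.field M
  have : Algebra.IsAlgebraic K (A ⧸ M) := .of_rank_lt_mk <|
    ((Ideal.Quotient.mkₐ K M).toLinearMap.rank_le_of_surjective
      Ideal.Quotient.mk_surjective).trans_lt hA
  let e : K ≃ₐ[K] A ⧸ M :=
    .ofBijective (Algebra.ofId K _) IsAlgClosed.algebraMap_bijective_of_isIntegral
  refine ⟨e.symm.toAlgHom.comp (Ideal.Quotient.mkₐ K M), ?_⟩
  ext u
  simp [RingHom.mem_ker, Ideal.Quotient.eq_zero_iff_mem]

theorem Cardinal.aleph0_lt_mk_complex : ℵ₀ < #ℂ := mk_complex ▸ aleph0_lt_continuum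

theorem MvPolynomial.exists_linearIndependent_of_mem_coeffsIn {K S σ : Type*} [Field K]
    [CommRing S] [Algebra K S] {B : Submodule K S} {F : MvPolynomial σ S}
    (hF : F ∈ coeffsIn σ B) :
    ∃ (k : ℕ) (a : Fin k → MvPolynomial σ K) (v : Fin k → S), LinearIndependent K v ∧
      (∀ j, v j ∈ B) ∧ F = ∑ j, map (algebraMap K S) (a j) * C (v j) := by
  let U := Submodule.span K (F.coeffs : Set S)
  let b := Module.finBasis K U
  let v : Fin (Module.finrank K U) → S := fun j => b j
  let Φ : (Fin (Module.finrank K U) → MvPolynomial σ K) →ₗ[K] MvPolynomial σ S :=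
    ∑ j, (LinearMap.mulRight K (C (v j))).comp
      ((mapAlgHom (Algebra.ofId K S)).toLinearMap.comp (LinearMap.proj j))
  have hUΦ : coeffsIn σ U ≤ LinearMap.range Φ := by
    refine coeffsIn_le.2 fun s hs i => ⟨fun j => monomial i (b.repr ⟨s, hs⟩ j), ?_⟩
    have hs : ∑ j, b.repr ⟨s, hs⟩ j • v j = s := by
      simpa only [v, Submodule.coe_sum, Submodule.coe_smul] using
        congrArg Subtype.val (b.sum_repr ⟨s, hs⟩)
    conv_rhs => rw [← hs]
    simp [Φ, Algebra.smul_def, map_sum, mul_comm _ (C _), C_mul_monomial, mul_comm (v _)]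
  obtain ⟨a, ha⟩ := hUΦ (mem_coeffsIn_iff_coeffs_subset.2 Submodule.subset_span)
  refine ⟨_, a, v, b.linearIndependent.map' U.subtype U.ker_subtype,
    fun j => Submodule.span_le.2 (mem_coeffsIn_iff_coeffs_subset.1 hF) (b j).2, ?_⟩
  rw [← ha]
  simp [Φ]

theorem MvPolynomial.eval_map_eval_sumAlgEquiv {K σ τ : Type*} [CommRing K] (x : σ → K)
    (y : τ → K) (f : MvPolynomial (σ ⊕ τ) K) :
    eval x (map (eval y) (sumAlgEquiv K σ τ f)) = eval (Sum.elim x y) f := by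
  show ((eval x).comp ((map (eval y)).comp (sumAlgEquiv K σ τ).toRingHom)) f = _
  congr 1
  refine ringHom_ext (fun c => by simp) ?_
  rintro (i | j) <;> simp

theorem MvPolynomial.sumAlgEquiv_symm_map_mul_C {K σ τ : Type*} [CommRing K]
    (a : MvPolynomial σ K) (b : MvPolynomial τ K) :
    (sumAlgEquiv K σ τ).symm (map (algebraMap K _) a * C b) =
      rename Sum.inl a * rename Sum.inr b := by
  rw [AlgEquiv.symm_apply_eq, map_mul]
  congr 1
  · exact (DFunLike.congr_fun (sumAlgEquiv_comp_rename_inl K σ τ) a).symm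
  · exact (DFunLike.congr_fun (sumAlgEquiv_comp_rename_inr K σ τ) b).symm

variable {σ τ : Type} {P : Set ((σ → ℂ) × (σ → ℂ))} {Q : Set ((τ → ℂ) × (τ → ℂ))}

theorem exists_eq_sum_rename_mul_rename_of_invariant {f : MvPolynomial (σ ⊕ τ) ℂ}
    (hP : ∀ p ∈ P, ∀ y, eval (Sum.elim p.1 y) f = eval (Sum.elim p.2 y) f)
    (hQ : ∀ x, ∀ q ∈ Q, eval (Sum.elim x q.1) f = eval (Sum.elim x q.2) f) :
    ∃ (k : ℕ) (a : Fin k → invAlg σ P) (b : Fin k → invAlg τ Q),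
      f = ∑ j, rename Sum.inl (a j : MvPolynomial σ ℂ) *
        rename Sum.inr (b j : MvPolynomial τ ℂ) := by
  have hcoeffs : sumAlgEquiv ℂ σ τ f ∈ coeffsIn σ (Subalgebra.toSubmodule (invAlg τ Q)) := by
    intro c q hq
    have hmap : map (eval q.1) (sumAlgEquiv ℂ σ τ f) = map (eval q.2) (sumAlgEquiv ℂ σ τ f) :=
      MvPolynomial.funext fun x => by simp only [eval_map_eval_sumAlgEquiv, hQ x q hq]
    simpa only [coeff_map] using congrArg (coeff c) hmap
  obtain ⟨k, a, v, hv, hvQ, hF⟩ := exists_linearIndependent_of_mem_coeffsIn hcoeffs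
  have hf : f = ∑ j, rename Sum.inl (a j) * rename Sum.inr (v j) := by
    rw [← (sumAlgEquiv ℂ σ τ).symm_apply_apply f, hF, map_sum]
    simp only [sumAlgEquiv_symm_map_mul_C]
  have heval (x : σ → ℂ) (y : τ → ℂ) :
      eval (Sum.elim x y) f = ∑ j, eval x (a j) * eval y (v j) := by
    simp [hf, eval_rename]
  have ha (j : Fin k) : a j ∈ invAlg σ P := by
    intro p hp
    have hzero : ∑ i, (eval p.1 (a i) - eval p.2 (a i)) • v i = 0 :=
      MvPolynomial.funext fun y => by
        simp [sub_mul, Finset.sum_sub_distrib, ← heval, hP p hp y]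
    exact sub_eq_zero.1 (Fintype.linearIndependent_iff.1 hv _ hzero j)
  exact ⟨k, fun j => ⟨a j, ha j⟩, fun j => ⟨v j, hvQ j⟩, hf⟩

noncomputable def invAlg.aeval (x : σ → ℂ) : invAlg σ P →ₐ[ℂ] ℂ :=
  (MvPolynomial.aeval x).comp (invAlg σ P).val

noncomputable def invAlg.rename (k : σ → τ) (hk : ∀ q ∈ Q, (q.1 ∘ k, q.2 ∘ k) ∈ P) :
    invAlg σ P →ₐ[ℂ] invAlg τ Q :=
  ((MvPolynomial.rename k).comp (invAlg σ P).val).codRestrict _ fun a q hq => by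
    simpa [eval_rename] using a.2 _ (hk q hq)

@[simp]
theorem invAlg.coe_rename (k : σ → τ) (hk : ∀ q ∈ Q, (q.1 ∘ k, q.2 ∘ k) ∈ P) (a : invAlg σ P) :
    (invAlg.rename k hk a : MvPolynomial τ ℂ) = MvPolynomial.rename k (a : MvPolynomial σ ℂ) :=
  rfl

theorem invAlg.eq_aeval_of_mem_zeroSet_ker {ψ : invAlg σ P →ₐ[ℂ] ℂ} {x : σ → ℂ}
    (hx : x ∈ zeroSet (RingHom.ker ψ)) : ψ = invAlg.aeval x := by
  ext a
  have := hx (a - algebraMap ℂ _ (ψ a)) (by simp [RingHom.mem_ker])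
  simp [sub_eq_zero, MvPolynomial.algebraMap_eq] at this
  simp [invAlg.aeval, this]

theorem invAlg.setOf_mem_subset_zeroSet_ker_aeval (x : σ → ℂ) :
    {y | (x, y) ∈ P} ⊆ zeroSet (RingHom.ker (invAlg.aeval (P := P) x)) := fun y hy a ha => by
  rw [← a.2 _ hy]
  exact ha

theorem invAlg.aeval_comp_rename (x : τ → ℂ) (k : σ → τ) (hk : ∀ q ∈ Q, (q.1 ∘ k, q.2 ∘ k) ∈ P) :
    (invAlg.aeval x).comp (invAlg.rename k hk) = invAlg.aeval (x ∘ k) := by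
  ext a
  simp [invAlg.aeval, eval_rename]

theorem invAlg.comp_mem_zeroSet_ker_comp_rename {ψ : invAlg τ Q →ₐ[ℂ] ℂ} {z : τ → ℂ}
    (hz : z ∈ zeroSet (RingHom.ker ψ)) (k : σ → τ) (hk : ∀ q ∈ Q, (q.1 ∘ k, q.2 ∘ k) ∈ P) :
    z ∘ k ∈ zeroSet (RingHom.ker (ψ.comp (invAlg.rename k hk))) := fun a ha => by
  simpa [eval_rename] using hz _ ha

theorem invAlg.rank_le_aleph0 [Countable σ] : Module.rank ℂ (invAlg σ P) ≤ ℵ₀ := by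
  rw [← Subalgebra.rank_toSubmodule]
  exact (Submodule.rank_le _).trans (MvPolynomial.rank_eq.trans_le mk_le_aleph0)

open TensorProduct

section prodRel

variable {n m : ℕ} {R : Set ((Fin n → ℂ) × (Fin n → ℂ))} {R' : Set ((Fin m → ℂ) × (Fin m → ℂ))}

theorem productMap_rename_inl_inr_surjective (hR : ∀ x, (x, x) ∈ R) (hR' : ∀ y, (y, y) ∈ R') :
    Function.Surjective (Algebra.TensorProduct.productMap
      (invAlg.rename (P := R) (Q := prodRel n m R R') Sum.inl fun _ hp => hp.1)
      (invAlg.rename (P := R') Sum.inr fun _ hp => hp.2)) := by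
  intro u
  obtain ⟨k, a, b, hu⟩ := exists_eq_sum_rename_mul_rename_of_invariant (P := R) (Q := R')
    (f := (u : MvPolynomial _ ℂ))
    (fun p hp y => u.2 (Sum.elim p.1 y, Sum.elim p.2 y) (by simpa [prodRel] using ⟨hp, hR' y⟩))
    (fun x q hq => u.2 (Sum.elim x q.1, Sum.elim x q.2) (by simpa [prodRel] using ⟨hR x, hq⟩))
  exact ⟨∑ j, a j ⊗ₜ b j, Subtype.ext (by simp [hu])⟩

theorem detectable_prodRel (hR : ∀ x, (x, x) ∈ R) (hR' : ∀ y, (y, y) ∈ R')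
    (hdR : Detectable (Fin n) R) (hdR' : Detectable (Fin m) R') :
    Detectable (Fin n ⊕ Fin m) (prodRel n m R R') := by
  intro 𝔪 h𝔪
  obtain ⟨φ, rfl⟩ := h𝔪.exists_algHom_ker_eq
    ((invAlg.rank_le_aleph0).trans_lt aleph0_lt_mk_complex)
  let ιl := invAlg.rename (P := R) (Q := prodRel n m R R') Sum.inl fun _ hp => hp.1
  let ιr := invAlg.rename (P := R') (Q := prodRel n m R R') Sum.inr fun _ hp => hp.2
  have hsurj {A : Type} [Ring A] [Algebra ℂ A] (ψ : A →ₐ[ℂ] ℂ) : Function.Surjective ψ :=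
    fun c => ⟨algebraMap ℂ A c, ψ.commutes c⟩
  obtain ⟨x, hx⟩ := hdR _ (RingHom.ker_isMaximal_of_surjective _ (hsurj (φ.comp ιl)))
  obtain ⟨y, hy⟩ := hdR' _ (RingHom.ker_isMaximal_of_surjective _ (hsurj (φ.comp ιr)))
  have hφl : φ.comp ιl = invAlg.aeval x :=
    invAlg.eq_aeval_of_mem_zeroSet_ker (hx ▸ hR x)
  have hφr : φ.comp ιr = invAlg.aeval y :=
    invAlg.eq_aeval_of_mem_zeroSet_ker (hy ▸ hR' y)
  have hφ : φ = invAlg.aeval (Sum.elim x y) := by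
    refine (AlgHom.cancel_right (productMap_rename_inl_inr_surjective hR hR')).1
      (Algebra.TensorProduct.ext' fun a b => ?_)
    simpa [invAlg.aeval, eval_rename] using
      congr_arg₂ (· * ·) (DFunLike.congr_fun hφl a) (DFunLike.congr_fun hφr b)
  refine ⟨Sum.elim x y, Set.Subset.antisymm (fun z hz => ⟨?_, ?_⟩) ?_⟩
  · have hzl : z ∘ Sum.inl ∈ zeroSet (RingHom.ker (φ.comp ιl)) :=
      invAlg.comp_mem_zeroSet_ker_comp_rename hz _ _
    rw [hx] at hzl
    simpa using hzl
  · have hzr : z ∘ Sum.inr ∈ zeroSet (RingHom.ker (φ.comp ιr)) :=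
      invAlg.comp_mem_zeroSet_ker_comp_rename hz _ _
    rw [hy] at hzr
    simpa using hzr
  · rw [hφ]
    exact invAlg.setOf_mem_subset_zeroSet_ker_aeval _

end prodRel

set_option synthInstance.maxHeartbeats 800000 in
set_option maxHeartbeats 2000000 in
open TensorProduct in
/-- A product of detectable equivalence relations is detectable; moreover every
maximal ideal of `ℂ[V]^R ⊗ ℂ[V']^{R'}` has residue field `ℂ`, i.e. is the kernel of a
`ℂ`-algebra homomorphism to `ℂ`. -/
theorem stmt17 (n m : ℕ) (R : Set ((Fin n → ℂ) × (Fin n → ℂ)))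
    (R' : Set ((Fin m → ℂ) × (Fin m → ℂ)))
    (hR : Equivalence fun x y => (x, y) ∈ R)
    (hR' : Equivalence fun x y => (x, y) ∈ R')
    (hdR : Detectable (Fin n) R) (hdR' : Detectable (Fin m) R') :
    Detectable (Fin n ⊕ Fin m) (prodRel n m R R') ∧
    ∀ M : Ideal ((invAlg (Fin n) R) ⊗[ℂ] (invAlg (Fin m) R')), M.IsMaximal →
      ∃ φ : ((invAlg (Fin n) R) ⊗[ℂ] (invAlg (Fin m) R')) →ₐ[ℂ] ℂ,
        M = RingHom.ker φ := by
  refine ⟨detectable_prodRel hR.refl hR'.refl hdR hdR', fun M hM =>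
    hM.exists_algHom_ker_eq (A := invAlg (Fin n) R ⊗[ℂ] invAlg (Fin m) R') ?_⟩
  rw [rank_tensorProduct']
  calc Module.rank ℂ (invAlg (Fin n) R) * Module.rank ℂ (invAlg (Fin m) R') ≤ ℵ₀ * ℵ₀ :=
        mul_le_mul' (invAlg.rank_le_aleph0) (invAlg.rank_le_aleph0)
    _ < #ℂ := by rw [aleph0_mul_aleph0]; exact aleph0_lt_mk_complex
end
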